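/- arXiv:2304.13248 — 6 statements merged into one kernel-verified Lean document; each statement's English description precedes it below -/
import Mathlib

section
/- Let P be an infinite lower triangular complex matrix with unit diagonal, H = P X P⁻¹ where X is the shift matrix, and let p_k(t) = ∑_j P_{k,j} t^j be the polynomials given by the rows of P. Then for every polynomial w of degree m and every n ∈ ℕ: p_n(t)·w(t) = ∑_{k=0}^{n+m} (w(H))_{n,k} · p_k(t). -/
open scoped BigOperators

/-- Product of infinite matrices; the sum is a `tsum`, which reduces to a finite
sum for the banded matrices considered here. -/
noncomputable def matMul (A B : ℕ → ℕ → ℂ) : ℕ → ℕ → ℂ :=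
  fun i k => ∑' j, A i j * B j k

noncomputable def matPow (A : ℕ → ℕ → ℂ) : ℕ → ℕ → ℕ → ℂ
  | 0 => fun i k => if i = k then 1 else 0
  | n + 1 => matMul (matPow A n) A

/-- Substitution of a matrix into a polynomial. -/
noncomputable def matPolyEval (w : Polynomial ℂ) (A : ℕ → ℕ → ℂ) : ℕ → ℕ → ℂ :=
  fun i k => ∑ m ∈ Finset.range (w.natDegree + 1), w.coeff m * matPow A m i k

/-- The shift matrix `X`, with `X_{j,j+1} = 1`. -/
def Xmat : ℕ → ℕ → ℂ := fun i k => if k = i + 1 then 1 else 0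

/-- The transpose `X̂` of the shift matrix. -/
def XhatMat : ℕ → ℕ → ℂ := fun i k => if i = k + 1 then 1 else 0

/-- The identity matrix. -/
def Imat : ℕ → ℕ → ℂ := fun i k => if i = k then 1 else 0

/-- The polynomial given by row `k` of a lower triangular matrix. -/
noncomputable def rowPoly (M : ℕ → ℕ → ℂ) (k : ℕ) : Polynomial ℂ :=
  ∑ j ∈ Finset.range (k + 1), Polynomial.C (M k j) * Polynomial.X ^ j


/-!
Since `P⁻¹ P = I`, the matrix `H = P X P⁻¹` satisfies `H P = P X`, hence `w(H) P = P w(X)`.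
Row `n` of `P w(X)` lists the coefficients of `p_n(t) w(t)`, because `w(X)` is the upper
triangular Toeplitz matrix of the coefficients of `w`; row `n` of `w(H) P` lists those of
`∑ₖ w(H)_{n,k} p_k(t)`. All matrices involved have bounded upper bandwidth, so every product
is a finite sum and matrix multiplication is associative.
-/

open Polynomial Finset

def IsUpperBanded (A : ℕ → ℕ → ℂ) (d : ℕ) : Prop := ∀ i k, i + d < k → A i k = 0

theorem isUpperBanded_Xmat : IsUpperBanded Xmat 1 := fun _ _ hk => if_neg (by omega)

namespace IsUpperBanded

variable {A B : ℕ → ℕ → ℂ} {a b : ℕ}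

theorem mono (hA : IsUpperBanded A a) (h : a ≤ b) : IsUpperBanded A b :=
  fun i k hk => hA i k (by omega)

theorem matMul_eq_sum_range (hA : IsUpperBanded A a) {i N : ℕ} (hN : i + a < N)
    (B : ℕ → ℕ → ℂ) (k : ℕ) : matMul A B i k = ∑ j ∈ range N, A i j * B j k :=
  tsum_eq_sum fun j hj => by
    rw [hA i j (by simp only [mem_range] at hj; omega), zero_mul]

theorem matMul (hA : IsUpperBanded A a) (hB : IsUpperBanded B b) :
    IsUpperBanded (_root_.matMul A B) (a + b) := by
  intro i k hk
  rw [hA.matMul_eq_sum_range (Nat.lt_succ_self _)]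
  refine sum_eq_zero fun j hj => ?_
  rw [hB j k (by simp only [mem_range] at hj; omega), mul_zero]

theorem matPow (hA : IsUpperBanded A a) (m : ℕ) : IsUpperBanded (_root_.matPow A m) (m * a) := by
  induction m with
  | zero => exact fun i k hk => if_neg (by omega)
  | succ m ih => exact (ih.matMul hA).mono (Nat.succ_mul m a).ge

theorem matPolyEval (hA : IsUpperBanded A a) (w : ℂ[X]) :
    IsUpperBanded (_root_.matPolyEval w A) (w.natDegree * a) := by
  intro i k hk
  refine sum_eq_zero fun m hm => ?_
  have hm : m ≤ w.natDegree := Nat.lt_succ_iff.mp (mem_range.mp hm)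
  rw [(hA.matPow m).mono (Nat.mul_le_mul_right a hm) i k hk, mul_zero]

end IsUpperBanded

section MatrixAlgebra

variable {A B : ℕ → ℕ → ℂ} {a b : ℕ}

theorem matMul_assoc (hA : IsUpperBanded A a) (hB : IsUpperBanded B b) (C : ℕ → ℕ → ℂ) :
    matMul (matMul A B) C = matMul A (matMul B C) := by
  funext i k
  calc matMul (matMul A B) C i k
      = ∑ j ∈ range (i + (a + b) + 1), ∑ l ∈ range (i + a + 1), A i l * B l j * C j k := by
        rw [(hA.matMul hB).matMul_eq_sum_range (N := i + (a + b) + 1) (by omega)]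
        simp_rw [hA.matMul_eq_sum_range (Nat.lt_succ_self _), sum_mul]
    _ = ∑ l ∈ range (i + a + 1), ∑ j ∈ range (i + (a + b) + 1), A i l * (B l j * C j k) := by
        rw [sum_comm]
        simp_rw [mul_assoc]
    _ = matMul A (matMul B C) i k := by
        rw [hA.matMul_eq_sum_range (Nat.lt_succ_self _)]
        refine sum_congr rfl fun l hl => ?_
        rw [hB.matMul_eq_sum_range (N := i + (a + b) + 1) (by simp only [mem_range] at hl; omega),
          mul_sum]

theorem matMul_Imat (A : ℕ → ℕ → ℂ) : matMul A Imat = A := by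
  funext i k
  have : ∀ j, A i j * Imat j k = if j = k then A i k else 0 := by
    intro j
    by_cases h : j = k <;> simp [Imat, h]
  simp only [matMul, this, tsum_ite_eq]

theorem Imat_matMul (A : ℕ → ℕ → ℂ) : matMul Imat A = A := by
  funext i k
  have : ∀ j, Imat i j * A j k = if j = i then A i k else 0 := by
    intro j
    by_cases h : j = i <;> simp [Imat, h, Ne.symm]
  simp only [matMul, this, tsum_ite_eq]

theorem matPow_matMul_of_matMul_eq {P X : ℕ → ℕ → ℂ} {p x : ℕ} (hA : IsUpperBanded A a)
    (hP : IsUpperBanded P p) (hX : IsUpperBanded X x) (h : matMul A P = matMul P X) (m : ℕ) :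
    matMul (matPow A m) P = matMul P (matPow X m) := by
  induction m with
  | zero => exact (Imat_matMul P).trans (matMul_Imat P).symm
  | succ m ih =>
    calc matMul (matMul (matPow A m) A) P
        = matMul (matMul (matPow A m) P) X := by
          rw [matMul_assoc (hA.matPow m) hA, h, matMul_assoc (hA.matPow m) hP]
      _ = matMul P (matMul (matPow X m) X) := by
          rw [ih, matMul_assoc hP (hX.matPow m)]

theorem matMul_matPolyEval (hB : IsUpperBanded B b) (w : ℂ[X]) (A : ℕ → ℕ → ℂ) (i k : ℕ) :
    matMul B (matPolyEval w A) i k =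
      ∑ m ∈ range (w.natDegree + 1), w.coeff m * matMul B (matPow A m) i k := by
  simp_rw [hB.matMul_eq_sum_range (Nat.lt_succ_self _), matPolyEval, mul_sum]
  rw [sum_comm]
  simp_rw [mul_left_comm]

theorem matPolyEval_matMul (hA : IsUpperBanded A a) (w : ℂ[X]) (B : ℕ → ℕ → ℂ) (i k : ℕ) :
    matMul (matPolyEval w A) B i k =
      ∑ m ∈ range (w.natDegree + 1), w.coeff m * matMul (matPow A m) B i k := by
  rw [(hA.matPolyEval w).matMul_eq_sum_range (Nat.lt_succ_self _)]
  simp_rw [matPolyEval, sum_mul]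
  rw [sum_comm]
  refine sum_congr rfl fun m hm => ?_
  have hm : m ≤ w.natDegree := Nat.lt_succ_iff.mp (mem_range.mp hm)
  rw [((hA.matPow m).mono (Nat.mul_le_mul_right a hm)).matMul_eq_sum_range
    (Nat.lt_succ_self _), mul_sum]
  simp_rw [mul_assoc]

theorem matPolyEval_matMul_of_matMul_eq {P X : ℕ → ℕ → ℂ} {p x : ℕ} (hA : IsUpperBanded A a)
    (hP : IsUpperBanded P p) (hX : IsUpperBanded X x) (h : matMul A P = matMul P X)
    (w : ℂ[X]) : matMul (matPolyEval w A) P = matMul P (matPolyEval w X) := by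
  funext i k
  simp_rw [matPolyEval_matMul hA, matMul_matPolyEval hP,
    matPow_matMul_of_matMul_eq hA hP hX h]

end MatrixAlgebra

theorem matPow_Xmat (m i k : ℕ) : matPow Xmat m i k = if k = i + m then 1 else 0 := by
  induction m generalizing k with
  | zero => simp [matPow, eq_comm]
  | succ m ih =>
    rw [matPow, (isUpperBanded_Xmat.matPow m).matMul_eq_sum_range (Nat.lt_succ_self _)]
    simp_rw [ih, Xmat, ite_mul, one_mul, zero_mul]
    rw [sum_ite_eq', if_pos (mem_range.mpr (by omega)), add_assoc]

theorem matPolyEval_Xmat (w : ℂ[X]) (i k : ℕ) :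
    matPolyEval w Xmat i k = if i ≤ k then w.coeff (k - i) else 0 := by
  simp_rw [matPolyEval, matPow_Xmat, mul_ite, mul_one, mul_zero]
  split_ifs with hik
  · have hm : ∀ m, k = i + m ↔ m = k - i := fun m => by omega
    simp_rw [hm, sum_ite_eq', mem_range]
    split_ifs with hD
    · rfl
    · exact (coeff_eq_zero_of_natDegree_lt (by omega)).symm
  · exact sum_eq_zero fun m _ => if_neg (by omega)

theorem rowPoly_coeff {M : ℕ → ℕ → ℂ} (hM : IsUpperBanded M 0) (k j : ℕ) :
    (rowPoly M k).coeff j = M k j := by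
  simp only [rowPoly, finsetSum_coeff, coeff_C_mul, coeff_X_pow, mul_ite, mul_one, mul_zero,
    sum_ite_eq, mem_range]
  split_ifs with hj
  · rfl
  · exact (hM k j (by omega)).symm

theorem coeff_rowPoly_mul {P : ℕ → ℕ → ℂ} (hP : IsUpperBanded P 0) (w : ℂ[X]) (n j : ℕ) :
    (rowPoly P n * w).coeff j = matMul P (matPolyEval w Xmat) n j := by
  rw [coeff_mul, Nat.sum_antidiagonal_eq_sum_range_succ_mk, matMul,
    tsum_eq_sum (s := range (j + 1))]
  · refine sum_congr rfl fun l hl => ?_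
    rw [rowPoly_coeff hP, matPolyEval_Xmat, if_pos (Nat.lt_succ_iff.mp (mem_range.mp hl))]
  · intro l hl
    rw [matPolyEval_Xmat, if_neg (by simp only [mem_range] at hl; omega), mul_zero]

theorem coeff_sum_C_mul_rowPoly {P : ℕ → ℕ → ℂ} (hP : IsUpperBanded P 0) (c : ℕ → ℂ)
    (N j : ℕ) : (∑ k ∈ range N, C (c k) * rowPoly P k).coeff j = ∑ k ∈ range N, c k * P k j := by
  simp only [finsetSum_coeff, coeff_C_mul, rowPoly_coeff hP]

theorem stmt4_general (P Pinv : ℕ → ℕ → ℂ)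
    (hLT : ∀ k j : ℕ, j > k → P k j = 0)
    (hLTinv : ∀ k j : ℕ, j > k → Pinv k j = 0)
    (hInv2 : matMul Pinv P = Imat)
    (w : Polynomial ℂ) (n : ℕ) :
    rowPoly P n * w =
      ∑ k ∈ Finset.range (n + w.natDegree + 1),
        Polynomial.C (matPolyEval w (matMul (matMul P Xmat) Pinv) n k) * rowPoly P k := by
  have hP : IsUpperBanded P 0 := fun i k hk => hLT i k (by omega)
  have hPinv : IsUpperBanded Pinv 0 := fun i k hk => hLTinv i k (by omega)
  have hPX : IsUpperBanded (matMul P Xmat) 1 := hP.matMul isUpperBanded_Xmat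
  have hH : IsUpperBanded (matMul (matMul P Xmat) Pinv) 1 := hPX.matMul hPinv
  have hHP : matMul (matMul (matMul P Xmat) Pinv) P = matMul P Xmat := by
    rw [matMul_assoc hPX hPinv, hInv2, matMul_Imat]
  ext j
  rw [coeff_rowPoly_mul hP, ← matPolyEval_matMul_of_matMul_eq hH hP isUpperBanded_Xmat hHP,
    (hH.matPolyEval w).matMul_eq_sum_range (N := n + w.natDegree + 1) (by omega), coeff_sum_C_mul_rowPoly hP]

theorem stmt4 (P Pinv : ℕ → ℕ → ℂ)
    (hLT : ∀ k j : ℕ, j > k → P k j = 0) (hDiag : ∀ k, P k k = 1)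
    (hLTinv : ∀ k j : ℕ, j > k → Pinv k j = 0)
    (hInv1 : matMul P Pinv = Imat) (hInv2 : matMul Pinv P = Imat)
    (w : Polynomial ℂ) (n : ℕ) :
    rowPoly P n * w =
      ∑ k ∈ Finset.range (n + w.natDegree + 1),
        Polynomial.C (matPolyEval w (matMul (matMul P Xmat) Pinv) n k) * rowPoly P k :=
  stmt4_general P Pinv hLT hLTinv hInv2 w n
end

section
/- With H = P X P⁻¹ as above (H_{n,n+1} = 1, entries h_{n,j} = H_{n,j} for j ≤ n) and linearization coefficients d(n,m,k) defined by p_n p_m = ∑_k d(n,m,k) p_k, the following recurrence holds for all n, m, k ∈ ℕ: d(n+1,m,k) = d(n,m+1,k) + (h_{m,m} − h_{n,n}) d(n,m,k) + ∑_{j=0}^{m−1} h_{m,j} d(n,j,k) − ∑_{j=0}^{n−1} h_{n,j} d(m,j,k). -/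
/-!
Reading `H P = P X` row by row gives `X * p_n = ∑_{l ≤ n+1} H_{n,l} p_l`. Expanding `X * p_n * p_m`
once through `X * p_n` and once through `X * p_m`, and comparing coefficients in the basis `(p_k)`
(each `p_k` is monic of degree `k`), yields `∑_l H_{n,l} d(l,m,k) = ∑_l H_{m,l} d(n,l,k)`.
Splitting off the terms `l = n + 1` and `l = m + 1`, where `H = 1`, and using the symmetry of `d`
gives the recurrence.
-/

open scoped BigOperators

open Polynomial Finset

lemma matMul_eq_sum_range {A B : ℕ → ℕ → ℂ} {N i : ℕ} (h : ∀ j, N ≤ j → A i j = 0)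
    (k : ℕ) :
    matMul A B i k = ∑ j ∈ range N, A i j * B j k :=
  tsum_eq_sum fun j hj => by rw [h j (by simpa using hj), zero_mul]

lemma matMul_Xmat_zero (A : ℕ → ℕ → ℂ) (n : ℕ) : matMul A Xmat n 0 = 0 := by
  simp [matMul, Xmat]

lemma matMul_Xmat_succ (A : ℕ → ℕ → ℂ) (n i : ℕ) : matMul A Xmat n (i + 1) = A n i := by
  rw [matMul, tsum_eq_single i] <;> simp +contextual [Xmat, eq_comm]

lemma rowPoly_mul_eq_sum_range {P : ℕ → ℕ → ℂ} {d : ℕ → ℕ → ℕ → ℂ}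
    (hd : ∀ n m : ℕ, rowPoly P n * rowPoly P m =
        ∑ k ∈ range (n + m + 1), C (d n m k) * rowPoly P k)
    (hd0 : ∀ n m k : ℕ, n + m < k → d n m k = 0) {a b N : ℕ} (h : a + b < N) :
    rowPoly P a * rowPoly P b = ∑ k ∈ range N, C (d a b k) * rowPoly P k := by
  rw [hd a b]
  refine sum_subset (range_subset_range.mpr h) fun k _ hk => ?_
  rw [hd0 a b k (by simpa using hk), C_0, zero_mul]

section LowerTriangular

variable {P Pinv : ℕ → ℕ → ℂ} (hLT : ∀ k j : ℕ, j > k → P k j = 0)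
  (hDiag : ∀ k, P k k = 1)
include hLT

local notation "H" => matMul (matMul P Xmat) Pinv

lemma coeff_rowPoly (k j : ℕ) : (rowPoly P k).coeff j = P k j := by
  simp only [rowPoly, finsetSum_coeff, coeff_C_mul_X_pow, sum_ite_eq, mem_range]
  split_ifs with h
  · rfl
  · exact (hLT k j (by omega)).symm

lemma matMul_P_Xmat_eq_zero {n i : ℕ} (h : n + 2 ≤ i) : matMul P Xmat n i = 0 := by
  obtain ⟨i, rfl⟩ : ∃ i', i = i' + 1 := ⟨i - 1, by omega⟩
  rw [matMul_Xmat_succ, hLT n i (by omega)]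

lemma H_apply_eq_sum (n l : ℕ) :
    H n l = ∑ i ∈ range (n + 2), matMul P Xmat n i * Pinv i l :=
  matMul_eq_sum_range (fun _ hi => matMul_P_Xmat_eq_zero hLT hi) l

variable {d : ℕ → ℕ → ℕ → ℂ}
  (hd : ∀ n m : ℕ, rowPoly P n * rowPoly P m =
      ∑ k ∈ range (n + m + 1), C (d n m k) * rowPoly P k)
  (hd0 : ∀ n m k : ℕ, n + m < k → d n m k = 0)

section Diag
include hDiag

lemma coeff_sum_C_mul_rowPoly_self (a : ℕ → ℂ) (N : ℕ) :
    (∑ k ∈ range (N + 1), C (a k) * rowPoly P k).coeff N = a N := by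
  simp only [finsetSum_coeff, coeff_C_mul, coeff_rowPoly hLT]
  rw [sum_range_succ, hDiag, mul_one,
    sum_eq_zero fun k hk => by rw [hLT k N (by simpa using hk), mul_zero], zero_add]

/-- The `rowPoly P k` are monic of degree `k`, so coefficients are read off from the top. -/
lemma eq_of_sum_C_mul_rowPoly_eq {a b : ℕ → ℂ} {N : ℕ}
    (h : ∑ k ∈ range N, C (a k) * rowPoly P k = ∑ k ∈ range N, C (b k) * rowPoly P k) :
    ∀ k < N, a k = b k := by
  induction N with
  | zero => intro k hk; omega
  | succ N ih =>
    have hN : a N = b N := by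
      rw [← coeff_sum_C_mul_rowPoly_self hLT hDiag a, h, coeff_sum_C_mul_rowPoly_self hLT hDiag]
    rw [sum_range_succ, sum_range_succ, hN, add_left_inj] at h
    intro k hk
    rcases Nat.lt_succ_iff_lt_or_eq.mp hk with hk | rfl
    exacts [ih h k hk, hN]

include hd hd0 in
lemma linCoeff_comm (a b k : ℕ) : d a b k = d b a k := by
  refine eq_of_sum_C_mul_rowPoly_eq hLT hDiag (N := a + b + k + 1) ?_ k (by omega)
  rw [← rowPoly_mul_eq_sum_range hd hd0 (by omega), mul_comm,
    rowPoly_mul_eq_sum_range hd hd0 (N := a + b + k + 1) (by omega)]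

end Diag

section Inverse

variable (hLTinv : ∀ k j : ℕ, j > k → Pinv k j = 0)
  (hInv2 : matMul Pinv P = Imat)
include hLTinv hInv2

/-- `H P = P X`, computed with finite sums. -/
lemma sum_H_mul_P (n j : ℕ) :
    ∑ l ∈ range (n + 2), H n l * P l j = matMul P Xmat n j :=
  calc ∑ l ∈ range (n + 2), H n l * P l j
      = ∑ i ∈ range (n + 2), matMul P Xmat n i * ∑ l ∈ range (n + 2), Pinv i l * P l j := by
        simp only [H_apply_eq_sum hLT, sum_mul, mul_sum, mul_assoc]
        exact sum_comm
    _ = ∑ i ∈ range (n + 2), matMul P Xmat n i * Imat i j :=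
        sum_congr rfl fun i hi => by
          rw [← hInv2,
            matMul_eq_sum_range (N := n + 2) fun l hl => hLTinv i l (by simp at hi; omega)]
    _ = matMul P Xmat n j := by
        simp only [Imat, mul_ite, mul_one, mul_zero, sum_ite_eq', mem_range]
        split_ifs with hj
        · rfl
        · exact (matMul_P_Xmat_eq_zero hLT (by omega)).symm

lemma X_mul_rowPoly (n : ℕ) :
    X * rowPoly P n = ∑ l ∈ range (n + 2), C (H n l) * rowPoly P l := by
  ext j
  simp only [finsetSum_coeff, coeff_C_mul, coeff_rowPoly hLT, sum_H_mul_P hLT hLTinv hInv2]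
  cases j with
  | zero => simp [matMul_Xmat_zero]
  | succ j => rw [coeff_X_mul, coeff_rowPoly hLT, matMul_Xmat_succ]

include hd hd0 in
lemma X_mul_rowPoly_mul {n m N : ℕ} (h : n + m + 2 ≤ N) :
    X * (rowPoly P n * rowPoly P m) = ∑ k ∈ range N,
      C (∑ l ∈ range (n + 2), H n l * d l m k) * rowPoly P k :=
  calc X * (rowPoly P n * rowPoly P m)
      = ∑ l ∈ range (n + 2), C (H n l) * (rowPoly P l * rowPoly P m) := by
        rw [← mul_assoc, X_mul_rowPoly hLT hLTinv hInv2, sum_mul]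
        simp only [mul_assoc]
    _ = ∑ l ∈ range (n + 2), ∑ k ∈ range N,
          C (H n l * d l m k) * rowPoly P k :=
        sum_congr rfl fun l hl => by
          rw [rowPoly_mul_eq_sum_range hd hd0 (N := N) (by simp at hl; omega), mul_sum]
          simp only [C_mul, mul_assoc]
    _ = _ := by
        rw [sum_comm]
        simp only [map_sum, sum_mul]

include hDiag

lemma Pinv_apply_self (k : ℕ) : Pinv k k = 1 := by
  have h := congrFun (congrFun hInv2 k) k
  rw [matMul_eq_sum_range (N := k + 1) fun j hj => hLTinv k j (by omega), sum_range_succ,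
    sum_eq_zero fun j hj => by rw [hLT j k (by simpa using hj), mul_zero], hDiag] at h
  simpa [Imat] using h

lemma H_apply_succ_self (n : ℕ) : H n (n + 1) = 1 := by
  rw [H_apply_eq_sum hLT, sum_range_succ,
    sum_eq_zero fun i hi => by rw [hLTinv i (n + 1) (by simp at hi; omega), mul_zero],
    matMul_Xmat_succ, hDiag, Pinv_apply_self hLT hDiag hLTinv hInv2, zero_add, one_mul]

include hd hd0 in
/-- The coefficient of `p_k` in `(X p_n) p_m = p_n (X p_m)`. -/
lemma sum_H_mul_linCoeff_eq (n m k : ℕ) :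
    ∑ l ∈ range (n + 2), H n l * d l m k =
      ∑ l ∈ range (m + 2), H m l * d n l k := by
  have h := eq_of_sum_C_mul_rowPoly_eq hLT hDiag (N := n + m + k + 2)
    (a := fun k => ∑ l ∈ range (n + 2), H n l * d l m k)
    (b := fun k => ∑ l ∈ range (m + 2), H m l * d l n k)
    (by rw [← X_mul_rowPoly_mul hLT hd hd0 hLTinv hInv2 (by omega), mul_comm (rowPoly P n),
      X_mul_rowPoly_mul hLT hd hd0 hLTinv hInv2 (N := n + m + k + 2) (by omega)]) k (by omega)
  exact h.trans (sum_congr rfl fun l _ => by rw [linCoeff_comm hLT hDiag hd hd0 l n k])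

end Inverse

end LowerTriangular

theorem stmt6_general (P Pinv : ℕ → ℕ → ℂ)
    (hLT : ∀ k j : ℕ, j > k → P k j = 0) (hDiag : ∀ k, P k k = 1)
    (hLTinv : ∀ k j : ℕ, j > k → Pinv k j = 0)
    (hInv2 : matMul Pinv P = Imat)
    (d : ℕ → ℕ → ℕ → ℂ)
    (hd : ∀ n m : ℕ, rowPoly P n * rowPoly P m =
        ∑ k ∈ Finset.range (n + m + 1), Polynomial.C (d n m k) * rowPoly P k)
    (hd0 : ∀ n m k : ℕ, n + m < k → d n m k = 0)
    (n m k : ℕ) :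
    let H := matMul (matMul P Xmat) Pinv
    d (n + 1) m k = d n (m + 1) k + (H m m - H n n) * d n m k
      + ∑ j ∈ Finset.range m, H m j * d n j k
      - ∑ j ∈ Finset.range n, H n j * d m j k := by
  intro H
  have key := sum_H_mul_linCoeff_eq hLT hDiag hd hd0 hLTinv hInv2 n m k
  simp only [sum_range_succ, H_apply_succ_self hLT hDiag hLTinv hInv2,
    one_mul] at key
  rw [sum_congr rfl fun j _ => by rw [linCoeff_comm hLT hDiag hd hd0 j m k]] at key
  linear_combination key

theorem stmt6 (P Pinv : ℕ → ℕ → ℂ)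
    (hLT : ∀ k j : ℕ, j > k → P k j = 0) (hDiag : ∀ k, P k k = 1)
    (hLTinv : ∀ k j : ℕ, j > k → Pinv k j = 0)
    (hInv1 : matMul P Pinv = Imat) (hInv2 : matMul Pinv P = Imat)
    (d : ℕ → ℕ → ℕ → ℂ)
    (hd : ∀ n m : ℕ, rowPoly P n * rowPoly P m =
        ∑ k ∈ Finset.range (n + m + 1), Polynomial.C (d n m k) * rowPoly P k)
    (hd0 : ∀ n m k : ℕ, n + m < k → d n m k = 0)
    (n m k : ℕ) :
    let H := matMul (matMul P Xmat) Pinv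
    d (n + 1) m k = d n (m + 1) k + (H m m - H n n) * d n m k
      + ∑ j ∈ Finset.range m, H m j * d n j k
      - ∑ j ∈ Finset.range n, H n j * d m j k :=
  stmt6_general P Pinv hLT hDiag hLTinv hInv2 d hd hd0 n m k
end

section
/- Let {p_n} be the monic polynomial sequence satisfying the three-term recurrence p_{n+1}(t) = (t − β_n)p_n(t) − α_n p_{n−1}(t) with α_n ≠ 0 for n ≥ 1, and let d(n,m,k) be the coefficients in p_n p_m = ∑_k d(n,m,k) p_k. Then d(n,m,0) = δ_{n,m} · α_1 α_2 ⋯ α_n for all n, m ∈ ℕ. -/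
open scoped BigOperators

/-!
Let `L` be the linear functional reading off the `p 0`-coordinate in the basis `(p k)`, so that
`d n m 0 = L (p n * p m)`. Writing the recurrence as
`X * p (n + 1) = p (n + 2) + β (n + 1) * p (n + 1) + α (n + 1) * p n`, induction on `j` gives
`L (X ^ j * p n) = 0` for `j < n` and `L (X ^ n * p n) = α 1 ⋯ α n`. Expanding the monic
polynomial `p n` of degree `n ≤ m` in monomials then gives `L (p n * p m) = δ_{n,m} α 1 ⋯ α n`.
-/

open Polynomial Finset

structure IsThreeTermRecurrence {R : Type*} [CommRing R] (β α : ℕ → R) (p : ℕ → R[X]) :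
    Prop where
  zero : p 0 = 1
  one : p 1 = X - C (β 0)
  add_two : ∀ n, p (n + 2) = (X - C (β (n + 1))) * p (n + 1) - C (α (n + 1)) * p n

namespace IsThreeTermRecurrence

variable {R : Type*} [CommRing R] {β α : ℕ → R} {p : ℕ → R[X]}

theorem monic_and_natDegree_eq [Nontrivial R] (h : IsThreeTermRecurrence β α p) (n : ℕ) :
    (p n).Monic ∧ (p n).natDegree = n := by
  induction n using Nat.twoStepInduction with
  | zero => simp [h.zero]
  | one => rw [h.one]; exact ⟨monic_X_sub_C _, natDegree_X_sub_C _⟩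
  | more n ih₀ ih₁ =>
    have hmonic : ((X - C (β (n + 1))) * p (n + 1)).Monic := (monic_X_sub_C _).mul ih₁.1
    have hdeg : ((X - C (β (n + 1))) * p (n + 1)).natDegree = n + 2 := by
      rw [(monic_X_sub_C _).natDegree_mul ih₁.1, natDegree_X_sub_C, ih₁.2]; ring
    have hlt : (C (α (n + 1)) * p n).natDegree < ((X - C (β (n + 1))) * p (n + 1)).natDegree :=
      (natDegree_C_mul_le _ _).trans_lt (by omega)
    rw [h.add_two]
    exact ⟨hmonic.sub_of_left (degree_lt_degree hlt),
      by rw [natDegree_sub_eq_left_of_natDegree_lt hlt, hdeg]⟩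

theorem monic [Nontrivial R] (h : IsThreeTermRecurrence β α p) (n : ℕ) : (p n).Monic :=
  (h.monic_and_natDegree_eq n).1

theorem natDegree_eq [Nontrivial R] (h : IsThreeTermRecurrence β α p) (n : ℕ) :
    (p n).natDegree = n :=
  (h.monic_and_natDegree_eq n).2

theorem coeff_self [Nontrivial R] (h : IsThreeTermRecurrence β α p) (n : ℕ) :
    (p n).coeff n = 1 := by
  simpa [h.natDegree_eq n] using (h.monic n).coeff_natDegree

theorem X_mul (h : IsThreeTermRecurrence β α p) (n : ℕ) :
    X * p (n + 1) = p (n + 2) + C (β (n + 1)) * p (n + 1) + C (α (n + 1)) * p n := by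
  rw [h.add_two]; ring

section Functional

variable {L : R[X] →ₗ[R] R}

theorem map_X_pow_mul (h : IsThreeTermRecurrence β α p)
    (hL : ∀ k, L (p k) = if k = 0 then 1 else 0) {j n : ℕ} (hjn : j ≤ n) :
    L (X ^ j * p n) = if j = n then ∏ i ∈ Icc 1 n, α i else 0 := by
  induction j generalizing n with
  | zero => rcases n with _ | n <;> simp [hL]
  | succ j ih =>
    obtain ⟨m, rfl⟩ : ∃ m, n = m + 1 := ⟨n - 1, by omega⟩
    have hexpand : X ^ (j + 1) * p (m + 1) = X ^ j * p (m + 2) +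
        C (β (m + 1)) * (X ^ j * p (m + 1)) + C (α (m + 1)) * (X ^ j * p m) := by
      rw [pow_succ, mul_assoc, h.X_mul]; ring
    rw [hexpand, map_add, map_add, C_mul', map_smul, C_mul', map_smul, ih (by omega),
      ih (by omega), ih (by omega), if_neg (by omega), if_neg (by omega),
      prod_Icc_succ_top (by omega)]
    by_cases hjm : j = m <;> simp [hjm, mul_comm]

theorem map_mul_eq_of_le [Nontrivial R] (h : IsThreeTermRecurrence β α p)
    (hL : ∀ k, L (p k) = if k = 0 then 1 else 0) {n m : ℕ} (hnm : n ≤ m) :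
    L (p n * p m) = if n = m then ∏ i ∈ Icc 1 n, α i else 0 := by
  have hexpand : p n * p m = ∑ j ∈ range (n + 1), C ((p n).coeff j) * (X ^ j * p m) := by
    conv_lhs => rw [as_sum_range_C_mul_X_pow (p n), h.natDegree_eq]
    rw [sum_mul]
    exact sum_congr rfl fun j _ => by ring
  have hterm : ∀ j ∈ range (n + 1), L (C ((p n).coeff j) * (X ^ j * p m)) =
      if j = m then (p n).coeff j * ∏ i ∈ Icc 1 m, α i else 0 := fun j hj => by
    have hjm : j ≤ m := (Nat.lt_succ_iff.mp (mem_range.mp hj)).trans hnm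
    rw [C_mul', map_smul, h.map_X_pow_mul hL hjm, smul_eq_mul, mul_ite, mul_zero]
  rw [hexpand, map_sum, sum_congr rfl hterm, sum_ite_eq']
  rcases hnm.eq_or_lt with rfl | hlt
  · rw [if_pos (self_mem_range_succ n), if_pos rfl, h.coeff_self, one_mul]
  · rw [if_neg (by simp only [mem_range]; omega), if_neg hlt.ne]

theorem map_mul_eq [Nontrivial R] (h : IsThreeTermRecurrence β α p)
    (hL : ∀ k, L (p k) = if k = 0 then 1 else 0) (n m : ℕ) :
    L (p n * p m) = if n = m then ∏ i ∈ Icc 1 n, α i else 0 := by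
  rcases le_total n m with hnm | hmn
  · exact h.map_mul_eq_of_le hL hnm
  · rw [mul_comm, h.map_mul_eq_of_le hL hmn]
    rcases eq_or_ne n m with rfl | hnm
    · rfl
    · rw [if_neg hnm.symm, if_neg hnm]

end Functional

section Basis

variable [IsDomain R]

noncomputable def toSequence (h : IsThreeTermRecurrence β α p) : Sequence R where
  elems' := p
  degree_eq' n := by rw [degree_eq_natDegree (h.monic n).ne_zero, h.natDegree_eq n]

noncomputable def basis (h : IsThreeTermRecurrence β α p) : Module.Basis ℕ R R[X] :=
  h.toSequence.basis fun n => (h.monic n).leadingCoeff ▸ isUnit_one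

theorem basis_apply (h : IsThreeTermRecurrence β α p) (n : ℕ) : h.basis n = p n :=
  Sequence.basis_eq_self _ _ _

theorem coord_zero_apply (h : IsThreeTermRecurrence β α p) (k : ℕ) :
    h.basis.coord 0 (p k) = if k = 0 then 1 else 0 := by
  rw [← h.basis_apply, Module.Basis.coord_apply, Module.Basis.repr_self, Finsupp.single_apply,
    eq_comm]

theorem coord_zero_sum_C_mul (h : IsThreeTermRecurrence β α p) (c : ℕ → R) (N : ℕ) :
    h.basis.coord 0 (∑ k ∈ range (N + 1), C (c k) * p k) = c 0 := by
  rw [map_sum, sum_eq_single_of_mem 0 (by simp) fun k _ hk => by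
      rw [C_mul', map_smul, h.coord_zero_apply, if_neg hk, smul_zero],
    C_mul', map_smul, h.coord_zero_apply, if_pos rfl, smul_eq_mul, mul_one]

end Basis

end IsThreeTermRecurrence

theorem stmt8_general (β : ℕ → ℂ) (α : ℕ → ℂ) (p : ℕ → Polynomial ℂ)
    (hp0 : p 0 = 1) (hp1 : p 1 = Polynomial.X - Polynomial.C (β 0))
    (hrec : ∀ n : ℕ, 1 ≤ n →
      p (n + 1) = (Polynomial.X - Polynomial.C (β n)) * p n - Polynomial.C (α n) * p (n - 1))
    (d : ℕ → ℕ → ℕ → ℂ)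
    (hd : ∀ n m : ℕ, p n * p m =
        ∑ k ∈ Finset.range (n + m + 1), Polynomial.C (d n m k) * p k) :
    ∀ n m : ℕ, d n m 0 = if n = m then ∏ i ∈ Finset.Icc 1 n, α i else 0 := by
  have h : IsThreeTermRecurrence β α p :=
    ⟨hp0, hp1, fun n => by simpa using hrec (n + 1) n.succ_pos⟩
  intro n m
  rw [← h.coord_zero_sum_C_mul (d n m), ← hd, h.map_mul_eq h.coord_zero_apply]

theorem stmt8 (β : ℕ → ℂ) (α : ℕ → ℂ) (p : ℕ → Polynomial ℂ)
    (hp0 : p 0 = 1) (hp1 : p 1 = Polynomial.X - Polynomial.C (β 0))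
    (hrec : ∀ n : ℕ, 1 ≤ n →
      p (n + 1) = (Polynomial.X - Polynomial.C (β n)) * p n - Polynomial.C (α n) * p (n - 1))
    (hα : ∀ n : ℕ, 1 ≤ n → α n ≠ 0)
    (d : ℕ → ℕ → ℕ → ℂ)
    (hd : ∀ n m : ℕ, p n * p m =
        ∑ k ∈ Finset.range (n + m + 1), Polynomial.C (d n m k) * p k)
    (hd0 : ∀ n m k : ℕ, n + m < k → d n m k = 0) :
    ∀ n m : ℕ, d n m 0 = if n = m then ∏ i ∈ Finset.Icc 1 n, α i else 0 :=
  stmt8_general β α p hp0 hp1 hrec d hd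
end

section
/- Let a, b ∈ ℂ with a ≠ 0, and let {p_n} be the monic Chebyshev-type polynomial sequence defined by p_0 = 1, p_1 = t − b, p_{n+1} = (t − b)p_n − a p_{n−1} for n ≥ 1. Let H = a X̂ + b I + X (where X is the shift with X_{j,j+1}=1 and X̂ its transpose). Then for all n ≥ 0: p_n(H) = ∑_{k=0}^{n} a^k X̂^k X^{n−k}. In particular p_n(H) does not depend on b. -/
open scoped BigOperators

/-!
On finitely supported row vectors, right multiplication by `X̂` and `X` are the backward and
forward shifts `L` and `S`, and `L * S = 1`. Since `H - b` acts as `S + a • L`, it suffices to show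
that `T n = ∑ a^k S^(n-k) L^k` satisfies the recurrence of `p n`. Peeling off the term without `S`
gives `S * T (n+1) = T (n+2) - a^(n+2) L^(n+2)`, and `L * S^(m+1) = S^m` gives
`L * T (n+1) = T n + a^(n+1) L^(n+2)`; hence `(S + a • L) * T (n+1) = T (n+2) + a • T n`.
-/

open Polynomial Finset

section ChebyshevSum

variable {K A : Type*} [CommSemiring K] [Semiring A] [Algebra K A]

lemma mul_pow_succ_of_mul_eq_one {L S : A} (h : L * S = 1) (m : ℕ) :
    L * S ^ (m + 1) = S ^ m := by
  rw [pow_succ', ← mul_assoc, h, one_mul]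

def chebyshevSum (a : K) (L S : A) (n : ℕ) : A :=
  ∑ x ∈ antidiagonal n, a ^ x.1 • (S ^ x.2 * L ^ x.1)

lemma chebyshevSum_eq_sum_range (a : K) (L S : A) (n : ℕ) :
    chebyshevSum a L S n = ∑ k ∈ range (n + 1), a ^ k • (S ^ (n - k) * L ^ k) :=
  Nat.sum_antidiagonal_eq_sum_range_succ (fun k m => a ^ k • (S ^ m * L ^ k)) n

lemma chebyshevSum_succ (a : K) (L S : A) (n : ℕ) :
    chebyshevSum a L S (n + 1) = a ^ (n + 1) • L ^ (n + 1) + S * chebyshevSum a L S n := by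
  simp only [chebyshevSum, Nat.sum_antidiagonal_succ', pow_zero, one_mul, mul_sum,
    mul_smul_comm, ← mul_assoc, ← pow_succ']

lemma mul_chebyshevSum_succ {a : K} {L S : A} (h : L * S = 1) (n : ℕ) :
    L * chebyshevSum a L S (n + 1) = a ^ (n + 1) • L ^ (n + 2) + chebyshevSum a L S n := by
  simp only [chebyshevSum, Nat.sum_antidiagonal_succ', pow_zero, one_mul, mul_sum, mul_add,
    mul_smul_comm, ← mul_assoc, mul_pow_succ_of_mul_eq_one h, ← pow_succ']

lemma add_smul_mul_chebyshevSum_succ {a : K} {L S : A} (h : L * S = 1) (n : ℕ) :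
    (S + a • L) * chebyshevSum a L S (n + 1)
      = chebyshevSum a L S (n + 2) + a • chebyshevSum a L S n := by
  rw [add_mul, smul_mul_assoc, mul_chebyshevSum_succ h, chebyshevSum_succ a L S (n + 1),
    smul_add, smul_smul, ← pow_succ']
  abel

end ChebyshevSum

theorem aeval_eq_chebyshevSum {K A : Type*} [CommRing K] [Ring A] [Algebra K A]
    {a b : K} {L S : A} (h : L * S = 1) {p : ℕ → K[X]}
    (hp0 : p 0 = 1) (hp1 : p 1 = X - C b)
    (hrec : ∀ n, p (n + 2) = (X - C b) * p (n + 1) - C a * p n) (n : ℕ) :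
    aeval (a • L + algebraMap K A b + S) (p n) = chebyshevSum a L S n := by
  have hY : aeval (a • L + algebraMap K A b + S) (X - C b) = S + a • L := by
    simp only [map_sub, aeval_X, aeval_C]
    abel
  induction n using Nat.twoStepInduction with
  | zero => simp [hp0, chebyshevSum]
  | one => simp [hp1, hY, chebyshevSum, Nat.antidiagonal_succ]
  | more n ih0 ih1 =>
    rw [hrec, map_sub, map_mul, map_mul, hY, ih0, ih1, aeval_C, add_smul_mul_chebyshevSum_succ h,
      Algebra.algebraMap_eq_smul_one, smul_mul_assoc, one_mul, add_sub_cancel_right]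

/-- Row-vector convention: `R` sends the `i`-th unit row vector to row `i` of `M`, so that
`R' * R` has matrix `matMul M N` (`HasMatrix.mul`). -/
def HasMatrix (R : Module.End ℂ (ℕ →₀ ℂ)) (M : ℕ → ℕ → ℂ) : Prop :=
  ∀ i j, R (Finsupp.single i 1) j = M i j

namespace HasMatrix

variable {R R' : Module.End ℂ (ℕ →₀ ℂ)} {M N : ℕ → ℕ → ℂ}

lemma apply_eq_tsum (hR : HasMatrix R M) (v : ℕ →₀ ℂ) (j : ℕ) :
    R v j = ∑' l, v l * M l j := by
  rw [tsum_eq_sum (s := v.support) fun l hl => by rw [Finsupp.notMem_support_iff.mp hl, zero_mul]]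
  conv_lhs => rw [← Finsupp.sum_single v]
  rw [Finsupp.sum, map_sum, Finsupp.finsetSum_apply]
  refine sum_congr rfl fun l _ => ?_
  rw [← Finsupp.smul_single_one, map_smul, Finsupp.smul_apply, hR, smul_eq_mul]

lemma mul (hR : HasMatrix R M) (hR' : HasMatrix R' N) : HasMatrix (R' * R) (matMul M N) :=
  fun i j => by simp only [Module.End.mul_apply, hR'.apply_eq_tsum, hR i, matMul]

lemma one : HasMatrix 1 Imat :=
  fun _ _ => Finsupp.single_apply

lemma add (hR : HasMatrix R M) (hR' : HasMatrix R' N) :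
    HasMatrix (R + R') (fun i j => M i j + N i j) :=
  fun i j => by simp only [LinearMap.add_apply, Finsupp.add_apply, hR i j, hR' i j]

lemma smul (hR : HasMatrix R M) (c : ℂ) : HasMatrix (c • R) (fun i j => c * M i j) :=
  fun i j => by simp only [LinearMap.smul_apply, Finsupp.smul_apply, hR i j, smul_eq_mul]

lemma pow (hR : HasMatrix R M) (n : ℕ) : HasMatrix (R ^ n) (matPow M n) := by
  induction n with
  | zero => exact one
  | succ n ih => rw [pow_succ']; exact ih.mul hR

lemma matPolyEval_eq (hR : HasMatrix R M) (w : ℂ[X]) (i j : ℕ) :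
    matPolyEval w M i j = aeval R w (Finsupp.single i 1) j := by
  simp only [aeval_eq_sum_range, LinearMap.sum_apply, Finsupp.finsetSum_apply,
    LinearMap.smul_apply, Finsupp.smul_apply, (hR.pow _) i j, smul_eq_mul, matPolyEval]

end HasMatrix

noncomputable def shiftRight : Module.End ℂ (ℕ →₀ ℂ) :=
  Finsupp.lmapDomain ℂ ℂ Nat.succ

noncomputable def shiftLeft : Module.End ℂ (ℕ →₀ ℂ) :=
  Finsupp.lcomapDomain Nat.succ Nat.succ_injective

lemma shiftLeft_mul_shiftRight : shiftLeft * shiftRight = 1 :=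
  LinearMap.ext (Finsupp.leftInverse_lcomapDomain_mapDomain (R := ℂ) (M := ℂ) _ Nat.succ_injective)

lemma hasMatrix_shiftRight : HasMatrix shiftRight Xmat := fun i j => by
  simp [shiftRight, Finsupp.mapDomain_single, Finsupp.single_apply, Xmat, eq_comm]

lemma hasMatrix_shiftLeft : HasMatrix shiftLeft XhatMat := fun i j => by
  simp [shiftLeft, Finsupp.single_apply, XhatMat]

theorem stmt11_general (a b : ℂ) (p : ℕ → Polynomial ℂ)
    (hp0 : p 0 = 1) (hp1 : p 1 = Polynomial.X - Polynomial.C b)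
    (hrec : ∀ n : ℕ, 1 ≤ n →
      p (n + 1) = (Polynomial.X - Polynomial.C b) * p n - Polynomial.C a * p (n - 1)) :
    let H : ℕ → ℕ → ℂ := fun i k => a * XhatMat i k + b * Imat i k + Xmat i k
    ∀ n i j : ℕ,
      matPolyEval (p n) H i j =
        ∑ k ∈ Finset.range (n + 1),
          a ^ k * matMul (matPow XhatMat k) (matPow Xmat (n - k)) i j := by
  intro H n i j
  have hH : HasMatrix (a • shiftLeft + b • 1 + shiftRight) H :=
    ((hasMatrix_shiftLeft.smul a).add (HasMatrix.one.smul b)).add hasMatrix_shiftRight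
  have hT := aeval_eq_chebyshevSum (A := Module.End ℂ (ℕ →₀ ℂ)) shiftLeft_mul_shiftRight
    hp0 hp1 (fun n => hrec (n + 1) n.succ_pos) n
  rw [hH.matPolyEval_eq, ← Algebra.algebraMap_eq_smul_one, hT, chebyshevSum_eq_sum_range]
  simp only [LinearMap.sum_apply, Finsupp.finsetSum_apply, LinearMap.smul_apply,
    Finsupp.smul_apply, smul_eq_mul,
    ((hasMatrix_shiftLeft.pow _).mul (hasMatrix_shiftRight.pow _)) i j]

theorem stmt11 (a b : ℂ) (ha : a ≠ 0) (p : ℕ → Polynomial ℂ)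
    (hp0 : p 0 = 1) (hp1 : p 1 = Polynomial.X - Polynomial.C b)
    (hrec : ∀ n : ℕ, 1 ≤ n →
      p (n + 1) = (Polynomial.X - Polynomial.C b) * p n - Polynomial.C a * p (n - 1)) :
    let H : ℕ → ℕ → ℂ := fun i k => a * XhatMat i k + b * Imat i k + Xmat i k
    ∀ n i j : ℕ,
      matPolyEval (p n) H i j =
        ∑ k ∈ Finset.range (n + 1),
          a ^ k * matMul (matPow XhatMat k) (matPow Xmat (n - k)) i j :=
  stmt11_general a b p hp0 hp1 hrec
end

section
/- Let a, b ∈ ℂ with a ≠ 0, and define the generalized Hermite polynomials by p_0 = 1, p_1 = t − b, p_{n+1}(t) = (t − b) p_n(t) − a n p_{n−1}(t) for n ≥ 1. Let H = X + bI + aD, where X is the shift matrix and D the differentiation matrix (D_{k+1,k} = k+1). Then p_n(H) = ∑_{k=0}^{n} (n choose k) a^k D^k X^{n−k} for all n ≥ 0; in particular p_n(H) is independent of b. -/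
open scoped BigOperators

/-- The differentiation matrix `D`, with `D_{k+1,k} = k+1`. -/
def Dmat : ℕ → ℕ → ℂ := fun i k => if i = k + 1 then (i : ℂ) else 0

/-! Read the matrices through their action on row vectors: with the row vector `eᵢ` taken as
`tⁱ`, the matrix `X` acts on `ℂ[t]` as multiplication by `t`, `D` as `d/dt`, and `H` as
`L = t + b + a d/dt`. So `pₙ(H)` corresponds to `pₙ(L)`, and the theorem becomes an identity of
operators that only uses the Weyl relation `Δ T = T Δ + 1` for `T = t`, `Δ = d/dt`.

Let `qₙ = ∑ₖ C(n,k) aᵏ T^(n-k) Δᵏ` be the normal-ordered form of `(T + aΔ)ⁿ`. It is the image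
of `1` under the `n`-th power of `A : z ↦ T z + a z Δ`, a sum of two commuting operators, whence
the binomial coefficients. The commutator `E : z ↦ Δ z - z Δ` satisfies `E A = A E + 1` and
`E 1 = 0`, so `Δ qₙ - qₙ Δ = n qₙ₋₁`. Hence `(T + aΔ) qₙ = qₙ₊₁ + a n qₙ₋₁`, the recurrence of
the `pₙ`, and `pₙ(L) = qₙ`. -/

open Polynomial LinearMap Finset

section Weyl

variable {𝕜 R : Type*} [CommRing 𝕜] [Ring R] [Algebra 𝕜 R]

theorem mul_pow_succ_of_mul_eq_mul_add_one {d x : R} (h : d * x = x * d + 1) (n : ℕ) :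
    d * x ^ (n + 1) = x ^ (n + 1) * d + (n + 1) • x ^ n := by
  induction n with
  | zero => simpa using h
  | succ n ih =>
    rw [pow_succ x (n + 1), ← mul_assoc, ih, add_mul, mul_assoc, h, pow_succ x n]
    simp only [mul_add, mul_one, ← mul_assoc, smul_mul_assoc]
    rw [← pow_succ, ← pow_succ]
    simp only [succ_nsmul _ (n + 1)]
    abel

def normalOrderedPow (T Δ : R) (a : 𝕜) (n : ℕ) : R :=
  ((mulLeft 𝕜 T + a • mulRight 𝕜 Δ) ^ n) 1

variable {T Δ : R} (a : 𝕜)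

theorem normalOrderedPow_succ (n : ℕ) :
    normalOrderedPow T Δ a (n + 1) =
      T * normalOrderedPow T Δ a n + a • (normalOrderedPow T Δ a n * Δ) := by
  simp [normalOrderedPow, pow_succ']

theorem mul_normalOrderedPow_succ (h : Δ * T = T * Δ + 1) (n : ℕ) :
    Δ * normalOrderedPow T Δ a (n + 1) =
      normalOrderedPow T Δ a (n + 1) * Δ + (n + 1) • normalOrderedPow T Δ a n := by
  have hE : (mulLeft 𝕜 Δ - mulRight 𝕜 Δ) * (mulLeft 𝕜 T + a • mulRight 𝕜 Δ) =
      (mulLeft 𝕜 T + a • mulRight 𝕜 Δ) * (mulLeft 𝕜 Δ - mulRight 𝕜 Δ) + 1 := by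
    ext z
    simp only [Module.End.mul_apply, LinearMap.sub_apply, LinearMap.add_apply,
      LinearMap.smul_apply, mulLeft_apply, mulRight_apply, Module.End.one_apply, map_sub, map_add,
      map_smul]
    simp only [add_mul, smul_sub, ← mul_assoc, h]
    noncomm_ring
  have := LinearMap.congr_fun (mul_pow_succ_of_mul_eq_mul_add_one hE n) 1
  simp only [Module.End.mul_apply, LinearMap.sub_apply, LinearMap.add_apply, LinearMap.smul_apply,
    mulLeft_apply, mulRight_apply, mul_one, one_mul, sub_self, map_zero, zero_add] at this
  rwa [sub_eq_iff_eq_add'] at this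

theorem normalOrderedPow_recurrence (h : Δ * T = T * Δ + 1) (n : ℕ) :
    (T + a • Δ) * normalOrderedPow T Δ a (n + 1) =
      normalOrderedPow T Δ a (n + 2) + (a * (n + 1)) • normalOrderedPow T Δ a n := by
  rw [normalOrderedPow_succ a (n + 1), add_mul, smul_mul_assoc, mul_normalOrderedPow_succ a h]
  simp only [smul_add, add_assoc, mul_smul, ← Nat.cast_smul_eq_nsmul 𝕜]
  push_cast; rfl

theorem normalOrderedPow_eq_sum (n : ℕ) :
    normalOrderedPow T Δ a n =
      ∑ k ∈ range (n + 1), ((n.choose k : 𝕜) * a ^ k) • (T ^ (n - k) * Δ ^ k) := by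
  rw [normalOrderedPow, add_comm, ((commute_mulLeft_right T Δ).symm.smul_left a).add_pow]
  simp only [_root_.smul_pow, pow_mulLeft, pow_mulRight, LinearMap.sum_apply, Module.End.mul_apply,
    LinearMap.smul_apply, Module.End.natCast_apply, mulLeft_apply, mulRight_apply]
  refine sum_congr rfl fun k _ => ?_
  rw [mul_smul, Nat.cast_smul_eq_nsmul, mul_smul_one, smul_mul_assoc, smul_comm]

theorem aeval_eq_normalOrderedPow (h : Δ * T = T * Δ + 1) (b : 𝕜) {p : ℕ → 𝕜[X]}
    (hp0 : p 0 = 1) (hp1 : p 1 = X - C b)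
    (hrec : ∀ n : ℕ, 1 ≤ n → p (n + 1) = (X - C b) * p n - C (a * n) * p (n - 1))
    (n : ℕ) :
    aeval (T + algebraMap 𝕜 R b + a • Δ) (p n) = normalOrderedPow T Δ a n := by
  have hX : aeval (T + algebraMap 𝕜 R b + a • Δ) (X - C b) = T + a • Δ := by
    simp only [map_sub, aeval_X, aeval_C]
    abel
  suffices ∀ n, aeval (T + algebraMap 𝕜 R b + a • Δ) (p n) = normalOrderedPow T Δ a n ∧
      aeval (T + algebraMap 𝕜 R b + a • Δ) (p (n + 1)) = normalOrderedPow T Δ a (n + 1)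
    from (this n).1
  intro n
  induction n with
  | zero => simp [hp0, hp1, hX, normalOrderedPow]
  | succ n ih =>
    refine ⟨ih.2, ?_⟩
    rw [hrec (n + 1) (by omega), Nat.add_sub_cancel, map_sub, map_mul, map_mul, hX, ih.1, ih.2,
      normalOrderedPow_recurrence a h, aeval_C, Algebra.algebraMap_eq_smul_one, smul_mul_assoc,
      one_mul]
    push_cast
    abel

end Weyl

noncomputable def toRowMatrix (f : Module.End ℂ ℂ[X]) : ℕ → ℕ → ℂ :=
  fun i j => (f (X ^ i)).coeff j

theorem tsum_coeff_mul_toRowMatrix (f : Module.End ℂ ℂ[X]) (u : ℂ[X]) (j : ℕ) :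
    ∑' l, u.coeff l * toRowMatrix f l j = (f u).coeff j := by
  rw [tsum_eq_sum (s := u.support) fun l hl => by rw [notMem_support_iff.1 hl, zero_mul]]
  conv_rhs => rw [u.as_sum_support_C_mul_X_pow]
  simp [toRowMatrix, ← smul_eq_C_mul, finsetSum_coeff]

theorem matMul_toRowMatrix (f g : Module.End ℂ ℂ[X]) :
    matMul (toRowMatrix f) (toRowMatrix g) = toRowMatrix (g * f) :=
  funext fun i => funext fun j => tsum_coeff_mul_toRowMatrix g (f (X ^ i)) j

theorem matPow_toRowMatrix (f : Module.End ℂ ℂ[X]) (n : ℕ) :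
    matPow (toRowMatrix f) n = toRowMatrix (f ^ n) := by
  induction n with
  | zero => funext i j; simp [matPow, toRowMatrix, coeff_X_pow, eq_comm]
  | succ n ih => rw [matPow, ih, matMul_toRowMatrix, pow_succ']

theorem matPolyEval_toRowMatrix (w : ℂ[X]) (f : Module.End ℂ ℂ[X]) :
    matPolyEval w (toRowMatrix f) = toRowMatrix (aeval f w) := by
  funext i j
  simp [matPolyEval, matPow_toRowMatrix, toRowMatrix, aeval_eq_sum_range, LinearMap.sum_apply,
    finsetSum_coeff]

theorem Xmat_eq_toRowMatrix : Xmat = toRowMatrix (mulLeft ℂ X) := by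
  funext i j
  simp [Xmat, toRowMatrix, ← pow_succ', coeff_X_pow]

theorem Dmat_eq_toRowMatrix : Dmat = toRowMatrix derivative := by
  funext i j
  simp only [Dmat, toRowMatrix, coeff_derivative, coeff_X_pow, ite_mul, one_mul, zero_mul]
  split_ifs with h h' h' <;> first | omega | simp [h]

theorem Imat_eq_toRowMatrix : Imat = toRowMatrix 1 := by
  funext i j
  simp [Imat, toRowMatrix, coeff_X_pow, eq_comm]

theorem derivative_mulLeft_X :
    (derivative : Module.End ℂ ℂ[X]) * mulLeft ℂ X = mulLeft ℂ X * derivative + 1 := by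
  refine LinearMap.ext fun u => ?_
  simp [derivative_mul, add_comm]

theorem stmt14_general (a b : ℂ) (p : ℕ → Polynomial ℂ)
    (hp0 : p 0 = 1) (hp1 : p 1 = Polynomial.X - Polynomial.C b)
    (hrec : ∀ n : ℕ, 1 ≤ n →
      p (n + 1) = (Polynomial.X - Polynomial.C b) * p n - Polynomial.C (a * n) * p (n - 1)) :
    let H : ℕ → ℕ → ℂ := fun i k => Xmat i k + b * Imat i k + a * Dmat i k
    ∀ n i j : ℕ,
      matPolyEval (p n) H i j =
        ∑ k ∈ Finset.range (n + 1),
          (n.choose k : ℂ) * a ^ k * matMul (matPow Dmat k) (matPow Xmat (n - k)) i j := by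
  intro H
  have hH : H = toRowMatrix (mulLeft ℂ X + algebraMap ℂ _ b + a • derivative) := by
    funext i k
    simp [H, Xmat_eq_toRowMatrix, Imat_eq_toRowMatrix, Dmat_eq_toRowMatrix, toRowMatrix,
      Algebra.algebraMap_eq_smul_one]
  intro n i j
  rw [hH, matPolyEval_toRowMatrix, aeval_eq_normalOrderedPow a derivative_mulLeft_X b hp0 hp1 hrec,
    normalOrderedPow_eq_sum, Dmat_eq_toRowMatrix, Xmat_eq_toRowMatrix]
  simp [matPow_toRowMatrix, matMul_toRowMatrix, toRowMatrix, LinearMap.sum_apply, finsetSum_coeff]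

theorem stmt14 (a b : ℂ) (ha : a ≠ 0) (p : ℕ → Polynomial ℂ)
    (hp0 : p 0 = 1) (hp1 : p 1 = Polynomial.X - Polynomial.C b)
    (hrec : ∀ n : ℕ, 1 ≤ n →
      p (n + 1) = (Polynomial.X - Polynomial.C b) * p n - Polynomial.C (a * n) * p (n - 1)) :
    let H : ℕ → ℕ → ℂ := fun i k => Xmat i k + b * Imat i k + a * Dmat i k
    ∀ n i j : ℕ,
      matPolyEval (p n) H i j =
        ∑ k ∈ Finset.range (n + 1),
          (n.choose k : ℂ) * a ^ k * matMul (matPow Dmat k) (matPow Xmat (n - k)) i j :=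
  stmt14_general a b p hp0 hp1 hrec
end

section
/- For the generalized Hermite sequence p_0 = 1, p_1 = t − b, p_{n+1} = (t − b)p_n − a n p_{n−1} (a ≠ 0), the linearization coefficients d(n,m,k) defined by p_n p_m = ∑_k d(n,m,k) p_k satisfy d(n,m,0) = δ_{n,m} · n! · a^n, and more generally the matrix A^{(k)} with entries d(n,m,k) equals (1/k!) ∑_{j=0}^{k} (k choose j) D^j A D̂^{k−j}, where A = Diag(1, a, 2! a², 3! a³, …), D is the matrix with D_{k+1,k} = k+1, and D̂ is its transpose. Equivalently, d(n,m,k) = (n! m! a^{(n+m−k)/2}) / (((n+k−m)/2)! ((m+k−n)/2)! ((n+m−k)/2)!) when n+m−k is even, nonnegative, and k ≥ |n−m|, and 0 otherwise. -/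
open scoped BigOperators

/-- The transpose of the differentiation matrix, `D̂_{k,k+1} = k+1`. -/
def DhatMat : ℕ → ℕ → ℂ := fun i k => if k = i + 1 then (k : ℂ) else 0

/-!
Let `umbralMap p` be the linear map `X ^ k ↦ p k`. The three-term recurrence says exactly
that `(X - b) * umbralMap p q = umbralMap p (X * q + a * q')`, so `p n * p m = umbralMap p (E n)`
for the polynomials `E n` given by `E 0 = X ^ m` and
`E (n + 1) = X * E n + a * (E n)' - a n * E (n - 1)`. A Pascal-type identity shows that
`∑ₗ C(n,l) C(m,l) l! aˡ X ^ (n + m - 2l)` satisfies this recurrence, and the `p k` are linearly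
independent (being monic of degree `k`), so `d n m k` is the coefficient of `X ^ k` in that
polynomial. In the matrix sum only the term `j = n - l` survives.
-/

open Polynomial Finset
open scoped Nat

section LinCoeff

variable {R : Type*} [CommRing R] (a : R)

-- The condition says that `k = n + m - 2 * l` for some `l`, which is then `(n + m - k) / 2`.
def linCoeff (n m k : ℕ) : R :=
  if k + 2 * ((n + m - k) / 2) = n + m then
    (n.choose ((n + m - k) / 2) * m.choose ((n + m - k) / 2) * ((n + m - k) / 2)! : R) *
      a ^ ((n + m - k) / 2)
  else 0

variable {a} {n m k l : ℕ}

theorem linCoeff_of_add_two_mul (h : k + 2 * l = n + m) :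
    linCoeff a n m k = n.choose l * m.choose l * l ! * a ^ l := by
  rw [linCoeff, show (n + m - k) / 2 = l by omega, if_pos h]

theorem linCoeff_eq_zero (h : ∀ l, k + 2 * l = n + m → n < l ∨ m < l) :
    linCoeff a n m k = 0 := by
  unfold linCoeff
  split_ifs with hk
  · rcases h _ hk with hl | hl <;> simp [Nat.choose_eq_zero_of_lt hl]
  · rfl

theorem linCoeff_of_lt (h : n + m < k) : linCoeff a n m k = 0 :=
  linCoeff_eq_zero fun _ _ => by omega

theorem linCoeff_zero_left : linCoeff a 0 m k = if k = m then 1 else 0 := by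
  split_ifs with hk
  · rw [linCoeff_of_add_two_mul (l := 0) (by omega)]
    simp
  · exact linCoeff_eq_zero fun _ _ => by omega

-- `linCoeff_succ_left` at `k + 2 * (l + 1) = n + 1 + m`, divided by `a ^ (l + 1)`.
theorem choose_recurrence (n m k l : ℕ) (h : k + 1 + 2 * l = n + m) :
    ((n + 1).choose (l + 1) * m.choose (l + 1) * (l + 1)! +
        n * ((n - 1).choose l * m.choose l * l !) : R) =
      n.choose (l + 1) * m.choose (l + 1) * (l + 1)! +
        (k + 1) * (n.choose l * m.choose l * l !) := by
  have pascal := Nat.choose_succ_succ' n l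
  have hm := Nat.choose_succ_right_eq m l
  have hn : n * (n - 1).choose l = n.choose l * (n - l) := by
    rcases n with _ | n
    · simp
    · simpa [mul_comm] using Nat.choose_mul_succ_eq n l
  have hsum :
      n.choose l * m.choose l * ((m - l) + (n - l)) = n.choose l * m.choose l * (k + 1) := by
    by_cases hl : l ≤ n ∧ l ≤ m
    · rw [show m - l + (n - l) = k + 1 by omega]
    · rcases not_and_or.mp hl with hl | hl <;> simp [Nat.choose_eq_zero_of_lt (not_le.mp hl)]
  have hfac := Nat.factorial_succ l
  apply_fun ((↑) : ℕ → R) at pascal hm hn hsum hfac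
  push_cast at pascal hm hn hsum hfac
  linear_combination ((m.choose (l + 1) : R) * (l + 1)!) * pascal + (n.choose l * l ! : R) * hm
    + (m.choose l * l ! : R) * hn + (l ! : R) * hsum + (n.choose l * m.choose (l + 1) : R) * hfac

theorem linCoeff_succ_left :
    linCoeff a (n + 1) m k = (if k = 0 then 0 else linCoeff a n m (k - 1)) +
      a * (k + 1) * linCoeff a n m (k + 1) - a * n * linCoeff a (n - 1) m k := by
  by_cases h : ∃ l, k + 2 * l = n + 1 + m
  · obtain ⟨_ | l, hl⟩ := h
    · rw [linCoeff_of_add_two_mul hl, if_neg (by omega),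
        linCoeff_of_add_two_mul (l := 0) (by omega), linCoeff_of_lt (by omega : n + m < k + 1)]
      rcases n with _ | n
      · simp
      · rw [linCoeff_of_lt (by omega : n + 1 - 1 + m < k)]
        simp
    have h₁ : (if k = 0 then 0 else linCoeff a n m (k - 1)) =
        n.choose (l + 1) * m.choose (l + 1) * (l + 1)! * a ^ (l + 1) := by
      split_ifs with hk
      · rcases (by omega : n < l + 1 ∨ m < l + 1) with h | h <;>
          simp [Nat.choose_eq_zero_of_lt h]
      · exact linCoeff_of_add_two_mul (by omega)
    have h₂ : a * n * linCoeff a (n - 1) m k =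
        a * n * ((n - 1).choose l * m.choose l * l ! * a ^ l) := by
      rcases n with _ | n
      · simp
      · rw [linCoeff_of_add_two_mul (l := l) (by omega)]
    rw [linCoeff_of_add_two_mul hl, h₁, h₂, linCoeff_of_add_two_mul (l := l) (by omega)]
    linear_combination a ^ (l + 1) * choose_recurrence (R := R) n m k l (by omega)
  · push Not at h
    have h₁ : (if k = 0 then 0 else linCoeff a n m (k - 1)) = 0 := by
      split_ifs with hk
      · rfl
      · exact linCoeff_eq_zero fun l _ => by have := h l; omega
    have h₂ : a * n * linCoeff a (n - 1) m k = 0 := by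
      rcases n with _ | n
      · simp
      · rw [linCoeff_eq_zero fun l _ => by have := h (l + 1); omega, mul_zero]
    rw [linCoeff_eq_zero fun l _ => by have := h l; omega, h₁, h₂,
      linCoeff_eq_zero fun l _ => by have := h (l + 1); omega]
    ring

noncomputable def linPoly (a : R) (n m : ℕ) : R[X] :=
  ∑ k ∈ range (n + m + 1), C (linCoeff a n m k) * X ^ k

theorem coeff_linPoly (k : ℕ) : (linPoly a n m).coeff k = linCoeff a n m k := by
  simp only [linPoly, finsetSum_coeff, coeff_C_mul_X_pow, sum_ite_eq, mem_range]
  split_ifs with hk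
  · rfl
  · exact (linCoeff_of_lt (by omega)).symm

theorem linPoly_zero_left : linPoly a 0 m = X ^ m := by
  ext k
  rw [coeff_linPoly, linCoeff_zero_left, coeff_X_pow]

theorem linPoly_succ_left :
    linPoly a (n + 1) m =
      X * linPoly a n m + C a * derivative (linPoly a n m) - C (a * n) * linPoly a (n - 1) m := by
  ext (_ | k) <;>
  simp only [coeff_sub, coeff_add, coeff_C_mul, coeff_X_mul, coeff_X_mul_zero, coeff_derivative,
    coeff_linPoly, linCoeff_succ_left, if_true, if_false, Nat.add_sub_cancel, Nat.succ_ne_zero] <;>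
  ring

end LinCoeff

section Umbral

variable {R : Type*} [CommRing R] {a b : R} {n m : ℕ}

noncomputable def umbralMap (p : ℕ → R[X]) : R[X] →ₗ[R] R[X] :=
  lsum fun k => LinearMap.toSpanSingleton R R[X] (p k)

variable {p : ℕ → R[X]}

theorem umbralMap_monomial (k : ℕ) (c : R) : umbralMap p (monomial k c) = c • p k := by
  simp [umbralMap]

theorem C_mul_umbralMap (c : R) (q : R[X]) : C c * umbralMap p q = umbralMap p (C c * q) := by
  rw [← smul_eq_C_mul, ← smul_eq_C_mul, map_smul]

theorem umbralMap_linPoly :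
    umbralMap p (linPoly a n m) = ∑ k ∈ range (n + m + 1), C (linCoeff a n m k) * p k := by
  simp [linPoly, C_mul_X_pow_eq_monomial, umbralMap_monomial, smul_eq_C_mul]

theorem X_sub_C_mul_umbralMap (hrec : ∀ k, p (k + 1) = (X - C b) * p k - C (a * k) * p (k - 1))
    (q : R[X]) : (X - C b) * umbralMap p q = umbralMap p (X * q + C a * derivative q) := by
  induction q using Polynomial.induction_on' with
  | add q r hq hr => simp only [map_add, mul_add, hq, hr]; abel
  | monomial k c =>
    rw [X_mul_monomial, derivative_monomial, C_mul_monomial, map_add, umbralMap_monomial,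
      umbralMap_monomial, umbralMap_monomial, hrec]
    simp only [smul_eq_C_mul, C_mul]
    ring

end Umbral

section Recurrence

variable {R : Type*} [CommRing R] {a b : R} {p : ℕ → R[X]}
  (h0 : p 0 = 1) (hrec : ∀ n, p (n + 1) = (X - C b) * p n - C (a * n) * p (n - 1))
include h0 hrec

theorem monic_and_degree_eq [Nontrivial R] (n : ℕ) : (p n).Monic ∧ (p n).degree = n := by
  induction n using Nat.strong_induction_on with
  | _ n ih =>
    rcases n with _ | n
    · simp [h0]
    obtain ⟨hmon, hdeg⟩ := ih n n.lt_succ_self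
    have hlead : ((X - C b) * p n).degree = ↑(n + 1) := by
      rw [hmon.degree_mul, degree_X_sub_C, hdeg]; norm_cast; omega
    have hlow : (C (a * n) * p (n - 1)).degree < ((X - C b) * p n).degree := by
      rw [← smul_eq_C_mul, hlead]
      refine (degree_smul_le _ _).trans_lt ?_
      rw [(ih (n - 1) (by omega)).2]
      exact_mod_cast (by omega : n - 1 < n + 1)
    rw [hrec]
    exact ⟨((monic_X_sub_C b).mul hmon).sub_of_left hlow,
      by rw [degree_sub_eq_left_of_degree_lt hlow, hlead]⟩

theorem mul_eq_umbralMap_linPoly (n m : ℕ) : p n * p m = umbralMap p (linPoly a n m) := by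
  induction n using Nat.strong_induction_on with
  | _ n ih =>
    rcases n with _ | n
    · rw [h0, one_mul, linPoly_zero_left, X_pow_eq_monomial, umbralMap_monomial, one_smul]
    rw [hrec, sub_mul, mul_assoc, mul_assoc, ih n n.lt_succ_self, ih (n - 1) (by omega),
      X_sub_C_mul_umbralMap hrec, C_mul_umbralMap, ← map_sub, linPoly_succ_left]

theorem mul_eq_sum_linCoeff (n m : ℕ) :
    p n * p m = ∑ k ∈ range (n + m + 1), C (linCoeff a n m k) * p k := by
  rw [mul_eq_umbralMap_linPoly h0 hrec, umbralMap_linPoly]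

theorem eq_linCoeff_of_mul_eq_sum [IsDomain R] {n m : ℕ} {d : ℕ → R}
    (hd : p n * p m = ∑ k ∈ range (n + m + 1), C (d k) * p k)
    (hd0 : ∀ k, n + m < k → d k = 0) (k : ℕ) : d k = linCoeff a n m k := by
  rcases lt_or_ge (n + m) k with hk | hk
  · rw [hd0 k hk, linCoeff_of_lt hk]
  let S : Sequence R := ⟨p, fun n => (monic_and_degree_eq h0 hrec n).2⟩
  have hsum : ∑ j ∈ range (n + m + 1), (d j - linCoeff a n m j) • S j = 0 := by
    simp only [sub_smul, sum_sub_distrib, smul_eq_C_mul]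
    exact sub_eq_zero.mpr (hd.symm.trans (mul_eq_sum_linCoeff h0 hrec n m))
  exact sub_eq_zero.mp
    (linearIndependent_iff'.mp S.linearIndependent _ _ hsum k (mem_range.mpr (by omega)))

end Recurrence

theorem linCoeff_apply_zero {R : Type*} [CommRing R] (a : R) (n m : ℕ) :
    linCoeff a n m 0 = if n = m then (n ! : R) * a ^ n else 0 := by
  split_ifs with h
  · subst h
    rw [linCoeff_of_add_two_mul (l := n) (by omega), Nat.choose_self]
    push_cast
    ring
  · exact linCoeff_eq_zero fun _ _ => by omega

theorem linCoeff_eq_div {K : Type*} [Field K] [CharZero K] (a : K) (n m k : ℕ) :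
    linCoeff a n m k =
      if (n + m - k) % 2 = 0 ∧ k ≤ n + m ∧ m ≤ n + k ∧ n ≤ m + k then
        (n ! : K) * m ! * a ^ ((n + m - k) / 2) /
          (((n + k - m) / 2)! * ((m + k - n) / 2)! * ((n + m - k) / 2)!)
      else 0 := by
  split_ifs with h
  · obtain ⟨l, hl⟩ : ∃ l, (n + m - k) / 2 = l := ⟨_, rfl⟩
    rw [hl, show (n + k - m) / 2 = n - l by omega, show (m + k - n) / 2 = m - l by omega,
      linCoeff_of_add_two_mul (l := l) (by omega), Nat.cast_choose K (by omega : l ≤ n),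
      Nat.cast_choose K (by omega : l ≤ m)]
    field_simp
  · exact linCoeff_eq_zero fun _ _ => by omega

def Amat (a : ℂ) : ℕ → ℕ → ℂ := fun i j => if i = j then (i ! : ℂ) * a ^ i else 0

theorem matMul_apply_of_col {A B : ℕ → ℕ → ℂ} (g : ℕ → ℕ) (hB : ∀ j k, j ≠ g k → B j k = 0)
    (i k : ℕ) : matMul A B i k = A i (g k) * B (g k) k :=
  tsum_eq_single (g k) fun j hj => by rw [hB j k hj, mul_zero]

theorem matPow_Dmat_apply (j n i : ℕ) :
    matPow Dmat j n i = if n = i + j then (n.descFactorial j : ℂ) else 0 := by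
  induction j generalizing i with
  | zero => simp [matPow]
  | succ j ih =>
    rw [matPow, matMul_apply_of_col (B := Dmat) (· + 1) (fun _ _ h => if_neg h), ih, Dmat,
      if_pos rfl]
    split_ifs with h₁ h₂ h₂
    · rw [h₁, Nat.descFactorial_succ, show i + 1 + j - j = i + 1 by omega]
      push_cast
      ring
    all_goals first | omega | simp

theorem matPow_DhatMat_apply (j l m : ℕ) :
    matPow DhatMat j l m = if m = l + j then (m.descFactorial j : ℂ) else 0 := by
  induction j generalizing m with
  | zero => simp [matPow, eq_comm]
  | succ j ih =>
    rw [matPow, matMul_apply_of_col (B := DhatMat) (· - 1) (fun _ _ h => if_neg (by omega)), ih,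
      DhatMat]
    split_ifs with h₁ h₂ h₃
    · obtain ⟨m, rfl⟩ : ∃ m', m = m' + 1 := ⟨m - 1, by omega⟩
      rw [Nat.succ_descFactorial_succ, Nat.add_sub_cancel]
      push_cast
      ring
    all_goals first | omega | simp

theorem matMul_Dmat_Amat_DhatMat_apply (a : ℂ) (j i n m : ℕ) :
    matMul (matMul (matPow Dmat j) (Amat a)) (matPow DhatMat i) n m =
      if i ≤ m ∧ n = m - i + j then
        (n.descFactorial j : ℂ) * (m - i)! * a ^ (m - i) * m.descFactorial i
      else 0 := by
  rw [matMul_apply_of_col (· - i) (fun _ _ h => by rw [matPow_DhatMat_apply, if_neg (by omega)]),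
    matMul_apply_of_col (B := Amat a) id (fun _ _ h => if_neg h), matPow_Dmat_apply,
    matPow_DhatMat_apply]
  simp only [Amat, id, if_true]
  split_ifs <;> first | omega | ring

theorem linCoeff_eq_matrix_sum (a : ℂ) (n m k : ℕ) :
    linCoeff a n m k = 1 / (k ! : ℂ) * ∑ j ∈ range (k + 1), (k.choose j : ℂ) *
      matMul (matMul (matPow Dmat j) (Amat a)) (matPow DhatMat (k - j)) n m := by
  by_cases h : ∃ l, k + 2 * l = n + m ∧ l ≤ n ∧ l ≤ m
  · obtain ⟨l, hl, hln, hlm⟩ := h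
    rw [sum_eq_single (n - l) (fun j _ hj => by
        rw [matMul_Dmat_Amat_DhatMat_apply, if_neg (by omega), mul_zero])
        (fun h => absurd (mem_range.mpr (by omega)) h),
      matMul_Dmat_Amat_DhatMat_apply, if_pos (by omega), show k - (n - l) = m - l by omega,
      show m - (m - l) = l by omega, linCoeff_of_add_two_mul hl]
    have hn := Nat.factorial_mul_descFactorial (by omega : n - l ≤ n)
    have hm := Nat.factorial_mul_descFactorial (by omega : m - l ≤ m)
    rw [show n - (n - l) = l by omega] at hn
    rw [show m - (m - l) = l by omega] at hm
    apply_fun ((↑) : ℕ → ℂ) at hn hm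
    push_cast at hn hm
    rw [Nat.cast_choose ℂ hln, Nat.cast_choose ℂ hlm, Nat.cast_choose ℂ (by omega : n - l ≤ k),
      show k - (n - l) = m - l by omega, ← hn, ← hm]
    field_simp
    exact (mul_div_mul_right _ _ (Nat.cast_ne_zero.mpr k.factorial_ne_zero)).symm
  · push Not at h
    rw [linCoeff_eq_zero fun l hl => by have := h l hl; omega, sum_eq_zero, mul_zero]
    intro j hj
    rw [matMul_Dmat_Amat_DhatMat_apply, if_neg, mul_zero]
    rintro ⟨hjm, hn⟩
    have := h (n - j)
    simp only [mem_range] at hj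
    omega

theorem stmt15_general (a b : ℂ) (p : ℕ → Polynomial ℂ)
    (hp0 : p 0 = 1) (hp1 : p 1 = Polynomial.X - Polynomial.C b)
    (hrec : ∀ n : ℕ, 1 ≤ n →
      p (n + 1) = (Polynomial.X - Polynomial.C b) * p n - Polynomial.C (a * n) * p (n - 1))
    (d : ℕ → ℕ → ℕ → ℂ)
    (hd : ∀ n m : ℕ, p n * p m =
        ∑ k ∈ Finset.range (n + m + 1), Polynomial.C (d n m k) * p k)
    (hd0 : ∀ n m k : ℕ, n + m < k → d n m k = 0) :
    let A : ℕ → ℕ → ℂ := fun i j => if i = j then (Nat.factorial i : ℂ) * a ^ i else 0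
    (∀ n m : ℕ, d n m 0 = if n = m then (Nat.factorial n : ℂ) * a ^ n else 0) ∧
    (∀ n m k : ℕ, d n m k =
      (1 / (Nat.factorial k : ℂ)) *
        ∑ j ∈ Finset.range (k + 1),
          (k.choose j : ℂ) *
            matMul (matMul (matPow Dmat j) A) (matPow DhatMat (k - j)) n m) ∧
    (∀ n m k : ℕ, d n m k =
      if (n + m - k) % 2 = 0 ∧ k ≤ n + m ∧ m ≤ n + k ∧ n ≤ m + k then
        (Nat.factorial n : ℂ) * (Nat.factorial m : ℂ) * a ^ ((n + m - k) / 2) /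
          ((Nat.factorial ((n + k - m) / 2) : ℂ) * (Nat.factorial ((m + k - n) / 2) : ℂ) *
            (Nat.factorial ((n + m - k) / 2) : ℂ))
      else 0) := by
  intro A
  have hrec' : ∀ n : ℕ, p (n + 1) = (X - C b) * p n - C (a * n) * p (n - 1) := by
    rintro (_ | n)
    · simp [hp0, hp1]
    · exact hrec (n + 1) n.succ_pos
  have hd_eq (n m k : ℕ) : d n m k = linCoeff a n m k :=
    eq_linCoeff_of_mul_eq_sum hp0 hrec' (hd n m) (hd0 n m) k
  refine ⟨fun n m => ?_, fun n m k => ?_, fun n m k => ?_⟩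
  · rw [hd_eq, linCoeff_apply_zero]
  · rw [hd_eq, linCoeff_eq_matrix_sum]
    rfl
  · rw [hd_eq, linCoeff_eq_div]

theorem stmt15 (a b : ℂ) (ha : a ≠ 0) (p : ℕ → Polynomial ℂ)
    (hp0 : p 0 = 1) (hp1 : p 1 = Polynomial.X - Polynomial.C b)
    (hrec : ∀ n : ℕ, 1 ≤ n →
      p (n + 1) = (Polynomial.X - Polynomial.C b) * p n - Polynomial.C (a * n) * p (n - 1))
    (d : ℕ → ℕ → ℕ → ℂ)
    (hd : ∀ n m : ℕ, p n * p m =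
        ∑ k ∈ Finset.range (n + m + 1), Polynomial.C (d n m k) * p k)
    (hd0 : ∀ n m k : ℕ, n + m < k → d n m k = 0) :
    let A : ℕ → ℕ → ℂ := fun i j => if i = j then (Nat.factorial i : ℂ) * a ^ i else 0
    (∀ n m : ℕ, d n m 0 = if n = m then (Nat.factorial n : ℂ) * a ^ n else 0) ∧
    (∀ n m k : ℕ, d n m k =
      (1 / (Nat.factorial k : ℂ)) *
        ∑ j ∈ Finset.range (k + 1),
          (k.choose j : ℂ) *
            matMul (matMul (matPow Dmat j) A) (matPow DhatMat (k - j)) n m) ∧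
    (∀ n m k : ℕ, d n m k =
      if (n + m - k) % 2 = 0 ∧ k ≤ n + m ∧ m ≤ n + k ∧ n ≤ m + k then
        (Nat.factorial n : ℂ) * (Nat.factorial m : ℂ) * a ^ ((n + m - k) / 2) /
          ((Nat.factorial ((n + k - m) / 2) : ℂ) * (Nat.factorial ((m + k - n) / 2) : ℂ) *
            (Nat.factorial ((n + m - k) / 2) : ℂ))
      else 0) :=
  stmt15_general a b p hp0 hp1 hrec d hd hd0
end
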